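/- arXiv:2103.05350 — 2 statements merged into one kernel-verified Lean document; each statement's English description precedes it below -/
import Mathlib

section
/- If u ∈ M_{2n}(ℂ) is a self-adjoint unitary commuting with the quaternionic structure Θ on ℂ^{2n}, then its +1-eigenspace has even complex dimension. -/
/-!
Commuting with `Θ = J ∘ conj` means `u J = J ū`, and `ū = uᵀ` for Hermitian `u`; hence
`uᵀ J = J u`, i.e. `u` is self-adjoint for the symplectic form `ω(x, y) = xᵀ J y`. As `u² = 1`,
`y + u y` is a `+1`-eigenvector for every `y`, and `ω(x, u y) = ω(u x, y) = ω(x, y)` for `x` in the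
`+1`-eigenspace, so `ω` stays nondegenerate there. A nondegenerate alternating form forces even
dimension: its Gram matrix is skew-symmetric, and a skew-symmetric matrix of odd size has
determinant `0`.
-/

open Matrix

/-- The matrix `J = [[0, -1ₙ],[1ₙ, 0]]` on `ℂ^{2n} = ℂⁿ ⊕ ℂⁿ`. -/
noncomputable def Jmat (n : ℕ) : Matrix (Fin n ⊕ Fin n) (Fin n ⊕ Fin n) ℂ :=
  Matrix.fromBlocks 0 (-1) 1 0

/-- The standard quaternionic structure `Θ = J ∘ conj` on `ℂ^{2n}`. -/
noncomputable def ThetaVec (n : ℕ) (v : Fin n ⊕ Fin n → ℂ) : Fin n ⊕ Fin n → ℂ :=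
  (Jmat n).mulVec (fun i => starRingEnd ℂ (v i))

theorem Matrix.det_eq_zero_of_transpose_eq_neg {ι R : Type*} [Fintype ι] [DecidableEq ι]
    [CommRing R] [NoZeroDivisors R] {A : Matrix ι ι R} (hA : Aᵀ = -A)
    (hodd : Odd (Fintype.card ι)) (h2 : (2 : R) ≠ 0) : A.det = 0 := by
  have hdet : A.det = -A.det := by
    simpa [hA, det_neg, hodd.neg_one_pow] using (det_transpose A).symm
  exact (mul_eq_zero.1 (by linear_combination hdet : (2 : R) * A.det = 0)).resolve_left h2

theorem Matrix.isAlt_toBilin'_of_transpose_eq_neg {ι R : Type*} [Fintype ι] [DecidableEq ι]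
    [CommRing R] [NoZeroDivisors R] {A : Matrix ι ι R} (hA : Aᵀ = -A) (h2 : (2 : R) ≠ 0) :
    (toBilin' A).IsAlt := by
  intro x
  have hself : x ⬝ᵥ A *ᵥ x = -(x ⬝ᵥ A *ᵥ x) := by
    conv_lhs => rw [dotProduct_mulVec, ← mulVec_transpose, hA, neg_mulVec, neg_dotProduct,
      dotProduct_comm]
  rw [toBilin'_apply']
  exact (mul_eq_zero.1 (by linear_combination hself : (2 : R) * _ = 0)).resolve_left h2

theorem Matrix.isSelfAdjoint_J_of_mul_J_eq {l R : Type*} [Fintype l] [DecidableEq l] [CommRing R]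
    {u : Matrix (l ⊕ l) (l ⊕ l) R} (h : u * J l R = J l R * uᵀ) : (J l R).IsSelfAdjoint u := by
  have huT : uᵀ = -(J l R * u * J l R) := by
    rw [Matrix.mul_assoc, h, ← Matrix.mul_assoc, J_squared, neg_one_mul, neg_neg]
  change uᵀ * J l R = J l R * u
  rw [huT, Matrix.neg_mul, Matrix.mul_assoc, J_squared, Matrix.mul_neg, Matrix.mul_one, neg_neg]

theorem Matrix.IsHermitian.mul_J_eq_of_commute_ThetaVec {n : ℕ}
    {u : Matrix (Fin n ⊕ Fin n) (Fin n ⊕ Fin n) ℂ} (hu : u.IsHermitian)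
    (hcomm : ∀ v, u *ᵥ ThetaVec n v = ThetaVec n (u *ᵥ v)) :
    u * J (Fin n) ℂ = J (Fin n) ℂ * uᵀ := by
  -- `Jmat n` is Mathlib's symplectic matrix `Matrix.J (Fin n) ℂ` by definition.
  have hTheta : ∀ v, ThetaVec n v = J (Fin n) ℂ *ᵥ star v := fun _ => rfl
  refine ext_iff_mulVec.2 fun w => ?_
  have h := hcomm (star w)
  rw [hTheta, hTheta, star_star, star_mulVec, ← mulVec_transpose, hu.eq, star_star] at h
  rw [← mulVec_mulVec, h, mulVec_mulVec]

open LinearMap (BilinForm)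

namespace LinearMap.BilinForm

variable {K V : Type*} [Field K] [AddCommGroup V] [Module K V] [FiniteDimensional K V]

theorem IsAlt.even_finrank {B : BilinForm K V} (hB : B.IsAlt) (hnd : B.Nondegenerate)
    (h2 : (2 : K) ≠ 0) : Even (Module.finrank K V) := by
  by_contra hodd
  let b := Module.finBasis K V
  have hskew : (toMatrix b B)ᵀ = -toMatrix b B := by
    ext i j
    rw [transpose_apply, Matrix.neg_apply, toMatrix_apply, toMatrix_apply, hB.neg_eq]
  refine (nondegenerate_iff_det_ne_zero b).1 hnd (det_eq_zero_of_transpose_eq_neg hskew ?_ h2)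
  rw [Fintype.card_fin]
  exact Nat.not_even_iff_odd.1 hodd

theorem Nondegenerate.restrict_eigenspace_one {B : BilinForm K V} (hB : B.Nondegenerate)
    {f : Module.End K V} (hf : LinearMap.IsAdjointPair B B f f) (hff : f * f = 1)
    (h2 : (2 : K) ≠ 0) : (B.restrict (Module.End.eigenspace f 1)).Nondegenerate := by
  refine .ofSeparatingLeft ?_
  rintro ⟨x, hx⟩ hxE
  rw [Module.End.mem_eigenspace_iff, one_smul] at hx
  ext
  refine hB.1 x fun y => ?_
  have hmem : y + f y ∈ Module.End.eigenspace f 1 := by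
    rw [Module.End.mem_eigenspace_iff, one_smul, map_add, ← Module.End.mul_apply, hff,
      Module.End.one_apply, add_comm]
  have hsum : B x (y + f y) = 0 := hxE ⟨_, hmem⟩
  have hfy : B x (f y) = B x y := by rw [← hf, hx]
  rw [map_add, hfy] at hsum
  exact (mul_eq_zero.1 (by linear_combination hsum : (2 : K) * B x y = 0)).resolve_left h2

end LinearMap.BilinForm

/-- If `u ∈ M_{2n}(ℂ)` is a self-adjoint unitary commuting with the quaternionic
structure `Θ` on `ℂ^{2n}`, then its `+1`-eigenspace has even complex dimension. -/
theorem plus_one_eigenspace_even_dim (n : ℕ)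
    (u : Matrix (Fin n ⊕ Fin n) (Fin n ⊕ Fin n) ℂ)
    (hsa : u.IsHermitian)
    (hunit : u * u = 1)
    (hcomm : ∀ v : Fin n ⊕ Fin n → ℂ, u.mulVec (ThetaVec n v) = ThetaVec n (u.mulVec v)) :
    Even (Module.finrank ℂ ↥(Module.End.eigenspace (Matrix.toLin' u) 1)) := by
  let ω := toBilin' (J (Fin n) ℂ)
  have hω : ω.Nondegenerate :=
    LinearMap.BilinForm.nondegenerate_toBilin'_iff_det_ne_zero.2 (isUnit_det_J _ _).ne_zero
  have hωalt : ω.IsAlt := isAlt_toBilin'_of_transpose_eq_neg (J_transpose _ _) two_ne_zero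
  have hu : LinearMap.IsAdjointPair ω ω (toLin' u) (toLin' u) :=
    (isAdjointPair_toLinearMap₂' _ _ _ _).2
      (isSelfAdjoint_J_of_mul_J_eq (hsa.mul_J_eq_of_commute_ThetaVec hcomm))
  have hinv : toLin' u * toLin' u = 1 := by
    rw [Module.End.mul_eq_comp, ← toLin'_mul, hunit, toLin'_one, Module.End.one_eq_id]
  exact LinearMap.BilinForm.IsAlt.even_finrank (fun x => hωalt x)
    (hω.restrict_eigenspace_one hu hinv two_ne_zero) two_ne_zero
end

section
/- Let X be a topological space with involution ι such that H¹_{ℤ₂}(X) = 0 in the sense that every continuous ι-invariant map X → U(1) is homotopic through invariant maps to a constant. Then every ℤ₂-equivariant continuous map q : X → U(2n) (with involution u ↦ Θ u* Θ⁻¹ on U(2n)) is equivariantly homotopic to a map taking values in SU(2n). -/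
open Matrix unitInterval

/-- The involution `u ↦ Θ u* Θ⁻¹ = J · conj(u*) · J⁻¹` on `U(2n)` induced by the standard
quaternionic structure `Θ = J ∘ conj` on `ℂ^{2n}`. -/
noncomputable def sharpMat (n : ℕ) (v : Matrix (Fin n ⊕ Fin n) (Fin n ⊕ Fin n) ℂ) :
    Matrix (Fin n ⊕ Fin n) (Fin n ⊕ Fin n) ℂ :=
  Jmat n * ((star v).map (starRingEnd ℂ)) * (Jmat n)⁻¹

/-
`det ∘ q` is a `ι`-invariant circle-valued map, because `det (Θ u* Θ⁻¹) = det u`. By hypothesis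
it is invariantly null-homotopic; lifting that homotopy through the covering `ℝ → U(1)`, starting
from a constant angle, gives a continuous angle `θ` with `det q = exp (iθ)`, and `θ` is invariant
because `x` and `ι x` have the same track and path lifts are unique. Then
`Q t x = exp (-i t θ x / 2n) • q x` is unitary, equivariant (the scalar is invariant and
`sharpMat n` is `ℂ`-linear), and `det (Q 1 x) = exp (-iθ x) det (q x) = 1`.
-/

theorem isUnit_Jmat (n : ℕ) : IsUnit (Jmat n) := by
  have h : Jmat n * fromBlocks 0 1 (-1) 0 = 1 := by
    simp [Jmat, fromBlocks_multiply, ← fromBlocks_one]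
  exact ⟨⟨Jmat n, _, h, mul_eq_one_comm.mp h⟩, rfl⟩

theorem det_sharpMat (n : ℕ) (v : Matrix (Fin n ⊕ Fin n) (Fin n ⊕ Fin n) ℂ) :
    (sharpMat n v).det = v.det := by
  rw [sharpMat, det_conj (isUnit_Jmat n), ← RingHom.mapMatrix_apply, ← RingHom.map_det,
    star_eq_conjTranspose, det_conjTranspose, Complex.star_def, Complex.conj_conj]

theorem sharpMat_smul (n : ℕ) (c : ℂ) (v : Matrix (Fin n ⊕ Fin n) (Fin n ⊕ Fin n) ℂ) :
    sharpMat n (c • v) = c • sharpMat n v := by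
  have h : (star (c • v)).map (starRingEnd ℂ) = c • (star v).map (starRingEnd ℂ) := by
    ext i j
    simp [star_smul]
  rw [sharpMat, h, Matrix.mul_smul, Matrix.smul_mul]
  rfl

theorem IsCoveringMap.liftHomotopy_apply_eq_of_forall_apply_eq {E B A : Type*}
    [TopologicalSpace E] [TopologicalSpace B] [TopologicalSpace A] {p : E → B}
    (cov : IsCoveringMap p) {H : C(I × A, B)} {f : C(A, E)} (H_0 : ∀ a, H (0, a) = p (f a))
    {a b : A} (hH : ∀ t, H (t, a) = H (t, b)) (hf : f a = f b) (t : I) :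
    cov.liftHomotopy H f H_0 (t, a) = cov.liftHomotopy H f H_0 (t, b) := by
  simp only [liftHomotopy_apply]
  congr 2
  ext s
  exact hH s

theorem Circle.coe_mem_unitary (z : Circle) : (z : ℂ) ∈ unitary ℂ := by
  rw [Unitary.mem_iff_star_mul_self, Complex.star_def, Complex.conj_mul', Circle.norm_coe]
  norm_num

theorem det_circleExp_smul_eq_one {m : Type*} [Fintype m] [DecidableEq m] {U : Matrix m m ℂ}
    {θ : ℝ} (hU : U.det = Circle.exp θ) :
    ((Circle.exp (-(θ / Fintype.card m)) : ℂ) • U).det = 1 := by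
  rw [det_smul]
  rcases (Fintype.card m).eq_zero_or_pos with hm | hm
  · have := Fintype.card_eq_zero_iff.mp hm
    rw [hm, pow_zero, one_mul, det_isEmpty]
  · rw [hU, ← Circle.coe_pow, ← Circle.exp_nsmul, ← Circle.coe_mul, ← Circle.exp_add, nsmul_eq_mul,
      mul_neg, mul_div_cancel₀ _ (by positivity), neg_add_cancel, Circle.exp_zero, Circle.coe_one]

theorem exists_invariant_angle_of_invariant_homotopy {X : Type*} [TopologicalSpace X]
    (ι : X → X) (F : C(I × X, ℂ)) (c : ℂ) (hF1 : ∀ x, F (1, x) = c)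
    (hF : ∀ t x, ‖F (t, x)‖ = 1) (hFι : ∀ t x, F (t, ι x) = F (t, x)) :
    ∃ θ : C(X, ℝ), (∀ x, θ (ι x) = θ x) ∧ ∀ x, (Circle.exp (θ x) : ℂ) = F (0, x) := by
  -- run backwards, so that the lift can start from the constant angle `arg c`
  let G : C(I × X, Circle) :=
    ⟨fun p ↦ ⟨F (σ p.1, p.2), mem_sphere_zero_iff_norm.2 (hF _ _)⟩, by fun_prop⟩
  have hG0 : ∀ x, G (0, x) = Circle.exp (ContinuousMap.const X c.arg x) := fun x ↦ by
    have hc : (G (0, x) : ℂ) = c := by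
      change F (σ 0, x) = c
      rw [symm_zero, hF1]
    rw [ContinuousMap.const_apply, ← hc, Circle.exp_arg]
  let L := Circle.isCoveringMap_exp.liftHomotopy G _ hG0
  refine ⟨L.curry 1, fun x ↦ ?_, fun x ↦ ?_⟩
  · exact Circle.isCoveringMap_exp.liftHomotopy_apply_eq_of_forall_apply_eq hG0
      (fun t ↦ Subtype.ext (hFι (σ t) x)) rfl 1
  · have hL : Circle.exp (L (1, x)) = G (1, x) :=
      congr_fun (Circle.isCoveringMap_exp.liftHomotopy_lifts G _ hG0) (1, x)
    change (Circle.exp (L (1, x)) : ℂ) = F (0, x)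
    rw [hL]
    change F (σ 1, x) = F (0, x)
    rw [symm_one]

theorem equivariant_retraction_to_SU_general (n : ℕ)
    (X : Type*) [TopologicalSpace X]
    (ι : X → X)
    (hH1 : ∀ f : C(X, ℂ), (∀ x, ‖f x‖ = 1) → (∀ x, f (ι x) = f x) →
      ∃ (F : C(I × X, ℂ)) (c : ℂ),
        (∀ x, F (0, x) = f x) ∧ (∀ x, F (1, x) = c) ∧
        (∀ t x, ‖F (t, x)‖ = 1) ∧ (∀ t x, F (t, ι x) = F (t, x)))
    (q : C(X, Matrix (Fin n ⊕ Fin n) (Fin n ⊕ Fin n) ℂ))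
    (hqu : ∀ x, q x ∈ Matrix.unitaryGroup (Fin n ⊕ Fin n) ℂ)
    (hqeq : ∀ x, q (ι x) = sharpMat n (q x)) :
    ∃ Q : C(I × X, Matrix (Fin n ⊕ Fin n) (Fin n ⊕ Fin n) ℂ),
      (∀ x, Q (0, x) = q x) ∧
      (∀ t x, Q (t, x) ∈ Matrix.unitaryGroup (Fin n ⊕ Fin n) ℂ) ∧
      (∀ t x, Q (t, ι x) = sharpMat n (Q (t, x))) ∧
      (∀ x, (Q (1, x)).det = 1) := by
  let detq : C(X, ℂ) := ⟨fun x ↦ (q x).det, q.continuous.matrix_det⟩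
  obtain ⟨F, c, hF0, hF1, hFnorm, hFι⟩ := hH1 detq
    (fun x ↦ CStarRing.norm_of_mem_unitary (det_of_mem_unitary (hqu x)))
    (fun x ↦ by simp [detq, hqeq, det_sharpMat])
  obtain ⟨θ, hθι, hθ⟩ := exists_invariant_angle_of_invariant_homotopy ι F c hF1 hFnorm hFι
  let k : ℝ := Fintype.card (Fin n ⊕ Fin n)
  refine ⟨⟨fun p ↦ (Circle.exp (-(p.1 * θ p.2 / k)) : ℂ) • q p.2, by fun_prop⟩,
    fun x ↦ ?_, fun t x ↦ ?_, fun t x ↦ ?_, fun x ↦ ?_⟩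
  · simp
  · exact Unitary.smul_mem_of_mem (Circle.coe_mem_unitary _) (hqu x)
  · simp [hθι, hqeq, sharpMat_smul]
  · have hdet : (q x).det = Circle.exp (θ x) := ((hθ x).trans (hF0 x)).symm
    simp only [ContinuousMap.coe_mk, Set.Icc.coe_one, one_mul]
    exact det_circleExp_smul_eq_one hdet

/-- If every invariant `U(1)`-valued map on `(X, ι)` is invariantly
null-homotopic (i.e. `H¹_{ℤ₂}(X) = 0`), then every `ℤ₂`-equivariant continuous map
`q : X → U(2n)` (with the involution `u ↦ Θ u* Θ⁻¹` on `U(2n)`) is equivariantly homotopic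
to a map taking values in `SU(2n)`. -/
theorem equivariant_retraction_to_SU (n : ℕ)
    (X : Type*) [TopologicalSpace X] [CompactSpace X]
    (ι : X → X) (hι : Continuous ι) (hinv : ∀ x, ι (ι x) = x)
    (hH1 : ∀ f : C(X, ℂ), (∀ x, ‖f x‖ = 1) → (∀ x, f (ι x) = f x) →
      ∃ (F : C(I × X, ℂ)) (c : ℂ),
        (∀ x, F (0, x) = f x) ∧ (∀ x, F (1, x) = c) ∧
        (∀ t x, ‖F (t, x)‖ = 1) ∧ (∀ t x, F (t, ι x) = F (t, x)))
    (q : C(X, Matrix (Fin n ⊕ Fin n) (Fin n ⊕ Fin n) ℂ))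
    (hqu : ∀ x, q x ∈ Matrix.unitaryGroup (Fin n ⊕ Fin n) ℂ)
    (hqeq : ∀ x, q (ι x) = sharpMat n (q x)) :
    ∃ Q : C(I × X, Matrix (Fin n ⊕ Fin n) (Fin n ⊕ Fin n) ℂ),
      (∀ x, Q (0, x) = q x) ∧
      (∀ t x, Q (t, x) ∈ Matrix.unitaryGroup (Fin n ⊕ Fin n) ℂ) ∧
      (∀ t x, Q (t, ι x) = sharpMat n (Q (t, x))) ∧
      (∀ x, (Q (1, x)).det = 1) :=
  equivariant_retraction_to_SU_general n X ι hH1 q hqu hqeq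
end
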